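/- Let V' be a unitary on ℂ^{d_A} ⊗ ℂ^{d_B}, V a unitary on ℂ^{d_B}, and θ ∈ (0, π/2). Let e₀ ∈ ℂ^{d_A} be a fixed unit vector and Π₀ = e₀e₀ᴴ. Suppose that for every ψ ∈ ℂ^{d_B}: (Π₀ ⊗ I) V'(e₀ ⊗ ψ) = sin(θ)·(e₀ ⊗ Vψ), i.e., V'(e₀ ⊗ ψ) = sin(θ)(e₀ ⊗ Vψ) + Φ^⊥(ψ) where Φ^⊥(ψ) := V'(e₀ ⊗ ψ) − sin(θ)(e₀ ⊗ Vψ) satisfies (Π₀ ⊗ I)Φ^⊥(ψ) = 0. Define R = 2Π₀ ⊗ I − I and S = −V' R V'ᴴ R. Then for every natural number ℓ and every ψ ∈ ℂ^{d_B}: Sᵉ V'(e₀ ⊗ ψ) = sin((2ℓ+1)θ)·(e₀ ⊗ Vψ) + (cos((2ℓ+1)θ)/cos(θ))·Φ^⊥(ψ), where Sᵉ denotes the ℓ-th power of S. -/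

import Mathlib

/-!
Write `J` for the isometry `ψ ↦ e₀ ⊗ ψ`, so that `Π₀ ⊗ I = J Jᴴ` and the hypothesis says
`Jᴴ V' J = sin θ • V`. Put `A = J V` and `B = V' J - sin θ • A` (the operator `Φ^⊥`). The
reflection `R = 2 J Jᴴ - 1` fixes `J` and `A`, and negates `B` and `V'ᴴ A - sin θ • J`, both of
which are killed by `Jᴴ`. With unitarity this shows that `S` maps the span of `A` and `B` to
itself, acting in the basis `A`, `B / cos θ` as the rotation by `2θ`. Since
`V' J = sin θ • A + B`, the `ℓ`-th power of `S` turns the angle `θ` into `(2ℓ + 1)θ`.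
-/

open Matrix
open scoped Kronecker

section TensorLeft

variable {R m : Type*} (n : Type*) [CommSemiring R] [Fintype n] [DecidableEq n]

def tensorLeft (e : m → R) : Matrix (m × n) n R :=
  Matrix.of fun p k => if p.2 = k then e p.1 else 0

lemma tensorLeft_mulVec (e : m → R) (ψ : n → R) :
    tensorLeft n e *ᵥ ψ = fun p => e p.1 * ψ p.2 := by
  ext p
  simp [tensorLeft, mulVec, dotProduct]

variable [StarRing R]

lemma tensorLeft_mul_conjTranspose (e : m → R) :
    tensorLeft n e * (tensorLeft n e)ᴴ = vecMulVec e (star e) ⊗ₖ 1 := by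
  ext ⟨i, j⟩ ⟨i', j'⟩
  simp [tensorLeft, Matrix.mul_apply, one_apply, vecMulVec_apply, apply_ite star, eq_comm]

lemma conjTranspose_tensorLeft_mul [Fintype m] (e : m → R) :
    (tensorLeft n e)ᴴ * tensorLeft n e = (star e ⬝ᵥ e) • 1 := by
  ext k k'
  simp [tensorLeft, Matrix.mul_apply, one_apply, dotProduct, Fintype.sum_prod_type,
    apply_ite star, eq_comm]

end TensorLeft

section BlockEncoding

variable {R ι κ : Type*} [CommRing R] [StarRing R] [Fintype ι] [Fintype κ]

section Reflection

variable [DecidableEq ι]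

def reflection (J : Matrix ι κ R) : Matrix ι ι R := (2 : R) • (J * Jᴴ) - 1

lemma reflection_mul_self [DecidableEq κ] {J : Matrix ι κ R} (hJ : Jᴴ * J = 1) :
    reflection J * J = J := by
  rw [reflection, Matrix.sub_mul, Matrix.one_mul, Matrix.smul_mul, Matrix.mul_assoc, hJ,
    Matrix.mul_one, two_smul, add_sub_cancel_right]

lemma reflection_mul_of_conjTranspose_mul_eq_zero {J : Matrix ι κ R} {o : Type*}
    {X : Matrix ι o R} (hX : Jᴴ * X = 0) : reflection J * X = -X := by
  rw [reflection, Matrix.sub_mul, Matrix.one_mul, Matrix.smul_mul, Matrix.mul_assoc, hX,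
    Matrix.mul_zero, smul_zero, zero_sub]

def amplificationStep (U : Matrix ι ι R) (J : Matrix ι κ R) : Matrix ι ι R :=
  -(U * reflection J * Uᴴ * reflection J)

end Reflection

variable [DecidableEq κ] {U : Matrix ι ι R} {J : Matrix ι κ R} {V : Matrix κ κ R} {s : R}

lemma conjTranspose_mul_mul_eq_smul_of_mulVec (hJ : Jᴴ * J = 1)
    (h : ∀ ψ, (J * Jᴴ) *ᵥ U *ᵥ J *ᵥ ψ = s • J *ᵥ V *ᵥ ψ) :
    Jᴴ * U * J = s • V := by
  refine ext_iff_mulVec.2 fun ψ => ?_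
  calc (Jᴴ * U * J) *ᵥ ψ = Jᴴ *ᵥ (J * Jᴴ) *ᵥ U *ᵥ J *ᵥ ψ := by
        simp only [mulVec_mulVec, ← Matrix.mul_assoc, hJ, Matrix.one_mul]
    _ = (s • V) *ᵥ ψ := by
        rw [h, mulVec_smul, mulVec_mulVec, hJ, one_mulVec, smul_mulVec]

lemma conjTranspose_mul_residual_eq_zero (hJ : Jᴴ * J = 1) (hUJ : Jᴴ * U * J = s • V) :
    Jᴴ * (U * J - s • (J * V)) = 0 := by
  rw [Matrix.mul_sub, ← Matrix.mul_assoc, hUJ, Matrix.mul_smul, ← Matrix.mul_assoc, hJ,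
    Matrix.one_mul, sub_self]

lemma conjTranspose_mul_adjoint_residual_eq_zero (hJ : Jᴴ * J = 1) (hV : Vᴴ * V = 1)
    (hs : star s = s) (hUJ : Jᴴ * U * J = s • V) :
    Jᴴ * (Uᴴ * (J * V) - s • J) = 0 := by
  have hUJ' : Jᴴ * Uᴴ * J = s • Vᴴ := by
    simpa [Matrix.mul_assoc, hs] using congrArg conjTranspose hUJ
  rw [Matrix.mul_sub, ← Matrix.mul_assoc, ← Matrix.mul_assoc, hUJ', Matrix.smul_mul, hV,
    Matrix.mul_smul, hJ, sub_self]

variable [DecidableEq ι]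

lemma amplificationStep_mul_target (hJ : Jᴴ * J = 1) (hU : U * Uᴴ = 1) (hV : Vᴴ * V = 1)
    (hs : star s = s) (hUJ : Jᴴ * U * J = s • V) :
    amplificationStep U J * (J * V)
      = (1 - 2 * s ^ 2) • (J * V) - (2 * s) • (U * J - s • (J * V)) := by
  set C := Uᴴ * (J * V) - s • J
  have hRC : reflection J * C = -C := reflection_mul_of_conjTranspose_mul_eq_zero
    (conjTranspose_mul_adjoint_residual_eq_zero hJ hV hs hUJ)
  have hUC : U * C = J * V - s • (U * J) := by
    rw [Matrix.mul_sub, ← Matrix.mul_assoc, hU, Matrix.one_mul, Matrix.mul_smul]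
  have hRA : reflection J * (J * V) = J * V := by
    rw [← Matrix.mul_assoc, reflection_mul_self hJ]
  have hUA : Uᴴ * (J * V) = s • J + C := (add_sub_cancel _ _).symm
  calc amplificationStep U J * (J * V)
      = -(U * (reflection J * (Uᴴ * (reflection J * (J * V))))) := by
        simp only [amplificationStep, Matrix.neg_mul, Matrix.mul_assoc]
    _ = -(s • (U * J) - U * C) := by
        rw [hRA, hUA, Matrix.mul_add, Matrix.mul_smul, reflection_mul_self hJ, hRC,
          ← sub_eq_add_neg, Matrix.mul_sub, Matrix.mul_smul]
    _ = (1 - 2 * s ^ 2) • (J * V) - (2 * s) • (U * J - s • (J * V)) := by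
        rw [hUC]
        module

lemma amplificationStep_mul_residual (hJ : Jᴴ * J = 1) (hU₁ : Uᴴ * U = 1) (hU₂ : U * Uᴴ = 1)
    (hV : Vᴴ * V = 1) (hs : star s = s) (hUJ : Jᴴ * U * J = s • V) :
    amplificationStep U J * (U * J - s • (J * V))
      = (2 * s * (1 - s ^ 2)) • (J * V) + (1 - 2 * s ^ 2) • (U * J - s • (J * V)) := by
  set C := Uᴴ * (J * V) - s • J
  have hRC : reflection J * C = -C := reflection_mul_of_conjTranspose_mul_eq_zero
    (conjTranspose_mul_adjoint_residual_eq_zero hJ hV hs hUJ)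
  have hUC : U * C = J * V - s • (U * J) := by
    rw [Matrix.mul_sub, ← Matrix.mul_assoc, hU₂, Matrix.one_mul, Matrix.mul_smul]
  set B := U * J - s • (J * V)
  have hRB : reflection J * B = -B := reflection_mul_of_conjTranspose_mul_eq_zero
    (conjTranspose_mul_residual_eq_zero hJ hUJ)
  have hUB : Uᴴ * B = (1 - s ^ 2) • J - s • C := by
    rw [Matrix.mul_sub, ← Matrix.mul_assoc, hU₁, Matrix.one_mul, Matrix.mul_smul]
    module
  calc amplificationStep U J * B
      = -(U * (reflection J * (Uᴴ * (reflection J * B)))) := by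
        simp only [amplificationStep, Matrix.neg_mul, Matrix.mul_assoc]
    _ = (1 - s ^ 2) • (U * J) + s • (U * C) := by
        rw [hRB, Matrix.mul_neg, hUB, Matrix.mul_neg, Matrix.mul_sub, Matrix.mul_smul,
          reflection_mul_self hJ, Matrix.mul_smul, hRC, Matrix.mul_neg, Matrix.mul_sub,
          Matrix.mul_smul, Matrix.mul_smul, Matrix.mul_neg]
        module
    _ = (2 * s * (1 - s ^ 2)) • (J * V) + (1 - 2 * s ^ 2) • B := by
        rw [hUC]
        module

end BlockEncoding

open Real in
lemma pow_apply_sin_smul_add_of_rotation {M : Type*} [AddCommGroup M] [Module ℝ M]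
    (f : Module.End ℝ M) {θ : ℝ} (hθ : cos θ ≠ 0) {a b : M}
    (ha : f a = (1 - 2 * sin θ ^ 2) • a - (2 * sin θ) • b)
    (hb : f b = (2 * sin θ * (1 - sin θ ^ 2)) • a + (1 - 2 * sin θ ^ 2) • b) (ℓ : ℕ) :
    (f ^ ℓ) (sin θ • a + b)
      = sin ((2 * ℓ + 1) * θ) • a + (cos ((2 * ℓ + 1) * θ) / cos θ) • b := by
  induction ℓ with
  | zero => simp [div_self hθ]
  | succ ℓ ih =>
    set φ := (2 * (ℓ : ℝ) + 1) * θ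
    have hφ : (2 * ((ℓ + 1 : ℕ) : ℝ) + 1) * θ = φ + 2 * θ := by push_cast; ring
    have hsin : sin (φ + 2 * θ)
        = sin φ * (1 - 2 * sin θ ^ 2) + cos φ / cos θ * (2 * sin θ * (1 - sin θ ^ 2)) := by
      rw [sin_add, sin_two_mul, cos_two_mul, cos_sq' θ]
      field_simp
      linear_combination (2 * sin θ * cos φ) * sin_sq_add_cos_sq θ
    have hcos : cos (φ + 2 * θ) / cos θ
        = sin φ * -(2 * sin θ) + cos φ / cos θ * (1 - 2 * sin θ ^ 2) := by
      rw [cos_add, sin_two_mul, cos_two_mul, cos_sq' θ]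
      field_simp
      ring
    rw [pow_succ', Module.End.mul_apply, ih, map_add, map_smul, map_smul, ha, hb, hφ, hsin, hcos]
    module

lemma amplificationStep_pow_mulVec {ι κ : Type*} [Fintype ι] [DecidableEq ι] [Fintype κ]
    [DecidableEq κ] {U : Matrix ι ι ℂ} {J : Matrix ι κ ℂ} {V : Matrix κ κ ℂ} {θ : ℝ}
    (hJ : Jᴴ * J = 1) (hU₁ : Uᴴ * U = 1) (hU₂ : U * Uᴴ = 1) (hV : Vᴴ * V = 1)
    (hUJ : Jᴴ * U * J = (Real.sin θ : ℂ) • V) (hθ : Real.cos θ ≠ 0) (ℓ : ℕ) (ψ : κ → ℂ) :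
    amplificationStep U J ^ ℓ *ᵥ U *ᵥ J *ᵥ ψ
      = Real.sin ((2 * ℓ + 1) * θ) • J *ᵥ V *ᵥ ψ
        + (Real.cos ((2 * ℓ + 1) * θ) / Real.cos θ) •
            (U *ᵥ J *ᵥ ψ - Real.sin θ • J *ᵥ V *ᵥ ψ) := by
  have hs : star (Real.sin θ : ℂ) = Real.sin θ := Complex.conj_ofReal _
  set f := (toLin' (amplificationStep U J)).restrictScalars ℝ
  have hf : ∀ v, f v = amplificationStep U J *ᵥ v := fun _ => rfl
  have hfa := congrArg (· *ᵥ ψ) (amplificationStep_mul_target hJ hU₂ hV hs hUJ)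
  have hfb := congrArg (· *ᵥ ψ) (amplificationStep_mul_residual hJ hU₁ hU₂ hV hs hUJ)
  simp only [add_mulVec, sub_mulVec, smul_mulVec, ← mulVec_mulVec, ← hf] at hfa hfb
  norm_cast at hfa hfb
  calc amplificationStep U J ^ ℓ *ᵥ U *ᵥ J *ᵥ ψ
      = (f ^ ℓ) (Real.sin θ • J *ᵥ V *ᵥ ψ + (U *ᵥ J *ᵥ ψ - Real.sin θ • J *ᵥ V *ᵥ ψ)) := by
        rw [add_sub_cancel, ← toLin'_apply, toLin'_pow, Module.End.pow_apply,
          Module.End.pow_apply]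
        rfl
    _ = _ := pow_apply_sin_smul_add_of_rotation f hθ hfa hfb ℓ

theorem oblivious_amplitude_amplification
    (dA dB : ℕ)
    (V' : Matrix (Fin dA × Fin dB) (Fin dA × Fin dB) ℂ)
    (hV'₁ : V'ᴴ * V' = 1) (hV'₂ : V' * V'ᴴ = 1)
    (V : Matrix (Fin dB) (Fin dB) ℂ)
    (hV₁ : Vᴴ * V = 1)
    (θ : ℝ) (hθ : θ ∈ Set.Ioo 0 (Real.pi / 2))
    (e₀ : Fin dA → ℂ) (he₀ : star e₀ ⬝ᵥ e₀ = 1)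
    (h : ∀ ψ : Fin dB → ℂ,
      ((Matrix.vecMulVec e₀ (star e₀)) ⊗ₖ (1 : Matrix (Fin dB) (Fin dB) ℂ)) *ᵥ
          (V' *ᵥ fun p : Fin dA × Fin dB => e₀ p.1 * ψ p.2)
        = (Real.sin θ : ℂ) • fun p : Fin dA × Fin dB => e₀ p.1 * (V *ᵥ ψ) p.2) :
    ∀ (ℓ : ℕ) (ψ : Fin dB → ℂ),
      (-(V' * ((2 : ℂ) • ((Matrix.vecMulVec e₀ (star e₀)) ⊗ₖ
            (1 : Matrix (Fin dB) (Fin dB) ℂ)) - 1) * V'ᴴ *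
          ((2 : ℂ) • ((Matrix.vecMulVec e₀ (star e₀)) ⊗ₖ
            (1 : Matrix (Fin dB) (Fin dB) ℂ)) - 1))) ^ ℓ *ᵥ
        (V' *ᵥ fun p : Fin dA × Fin dB => e₀ p.1 * ψ p.2)
      = ((Real.sin ((2 * (ℓ : ℝ) + 1) * θ) : ℂ) •
            fun p : Fin dA × Fin dB => e₀ p.1 * (V *ᵥ ψ) p.2)
        + ((Real.cos ((2 * (ℓ : ℝ) + 1) * θ) / Real.cos θ : ℝ) : ℂ) •
            ((V' *ᵥ fun p : Fin dA × Fin dB => e₀ p.1 * ψ p.2)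
              - (Real.sin θ : ℂ) •
                  fun p : Fin dA × Fin dB => e₀ p.1 * (V *ᵥ ψ) p.2) := by
  intro ℓ ψ
  simp only [← tensorLeft_mul_conjTranspose, ← tensorLeft_mulVec] at h ⊢
  have hJ := conjTranspose_tensorLeft_mul (Fin dB) e₀
  rw [he₀, one_smul] at hJ
  have hcos : Real.cos θ ≠ 0 :=
    (Real.cos_pos_of_mem_Ioo ⟨by linarith [hθ.1, Real.pi_pos], hθ.2⟩).ne'
  simp only [Complex.coe_smul]
  -- the matrix raised to the power `ℓ` unfolds to `amplificationStep V' (tensorLeft (Fin dB) e₀)`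
  exact amplificationStep_pow_mulVec hJ hV'₁ hV'₂ hV₁
    (conjTranspose_mul_mul_eq_smul_of_mulVec hJ h) hcos ℓ ψ
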